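/- arXiv:1910.10284 — 6 statements merged into one kernel-verified Lean document; each statement's English description precedes it below -/
import Mathlib

section
/- For any smooth (C¹) vector field w : ℝ² → ℝ², div Σ₁(w) = -2 w₁ w₂ div w + (∂₁w₂ + ∂₂w₁)(1 - |w|²) pointwise. -/
noncomputable section
open Real

/-- The first Jin-Kohn entropy. -/
def JKS1 (v : ℝ × ℝ) : ℝ × ℝ :=
  (v.2 * (1 - v.1 ^ 2 - v.2 ^ 2 / 3), v.1 * (1 - v.2 ^ 2 - v.1 ^ 2 / 3))

/-- The second Jin-Kohn entropy. -/
def JKS2 (v : ℝ × ℝ) : ℝ × ℝ :=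
  (-v.1 * (1 - 2 * v.1 ^ 2 / 3), v.2 * (1 - 2 * v.2 ^ 2 / 3))

/-- Partial derivative in the first coordinate direction. -/
def pd1 (f : ℝ × ℝ → ℝ) (x : ℝ × ℝ) : ℝ := fderiv ℝ f x (1, 0)

/-- Partial derivative in the second coordinate direction. -/
def pd2 (f : ℝ × ℝ → ℝ) (x : ℝ × ℝ) : ℝ := fderiv ℝ f x (0, 1)

theorem fderiv_mul_one_sub_sq_sub_sq_div_three_apply {E : Type*} [NormedAddCommGroup E]
    [NormedSpace ℝ E] {f g : E → ℝ} {x : E}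
    (hf : DifferentiableAt ℝ f x) (hg : DifferentiableAt ℝ g x) (v : E) :
    fderiv ℝ (fun y => g y * (1 - f y ^ 2 - g y ^ 2 / 3)) x v
      = fderiv ℝ g x v * (1 - f x ^ 2 - g x ^ 2 / 3)
        - g x * (2 * f x * fderiv ℝ f x v + 2 * g x * fderiv ℝ g x v / 3) := by
  have h : HasFDerivAt (fun y => g y * (1 - f y ^ 2 - g y ^ 2 / 3)) _ x :=
    hg.hasFDerivAt.mul (((hasFDerivAt_const 1 x).sub (hf.hasFDerivAt.pow 2)).sub
      ((hg.hasFDerivAt.pow 2).mul_const 3⁻¹))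
  rw [h.fderiv]
  simp only [Nat.add_one_sub_one, pow_one, nsmul_eq_mul, Nat.cast_ofNat, zero_sub,
    add_apply, smul_apply, sub_apply, neg_apply, smul_eq_mul]
  ring

theorem stmt2 (w : ℝ × ℝ → ℝ × ℝ) (hw : ContDiff ℝ 1 w) (x : ℝ × ℝ) :
    pd1 (fun y => (JKS1 (w y)).1) x + pd2 (fun y => (JKS1 (w y)).2) x
      = -2 * (w x).1 * (w x).2
          * (pd1 (fun y => (w y).1) x + pd2 (fun y => (w y).2) x)
        + (pd1 (fun y => (w y).2) x + pd2 (fun y => (w y).1) x)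
          * (1 - ((w x).1 ^ 2 + (w x).2 ^ 2)) := by
  have hd : DifferentiableAt ℝ w x := hw.differentiable one_ne_zero x
  simp only [JKS1, pd1, pd2]
  rw [fderiv_mul_one_sub_sq_sub_sq_div_three_apply hd.fst hd.snd,
    fderiv_mul_one_sub_sq_sub_sq_div_three_apply hd.snd hd.fst]
  ring
end
end

section
/- For any smooth (C¹) vector field w : ℝ² → ℝ², div Σ₂(w) = (w₁² - w₂²) div w + (∂₂w₂ - ∂₁w₁)(1 - |w|²) pointwise. -/
noncomputable section
open Real

lemma keyd (f : ℝ × ℝ → ℝ) (x : ℝ × ℝ) (hf : DifferentiableAt ℝ f x) (v : ℝ × ℝ) :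
    fderiv ℝ (fun y => f y * (1 - 2 * f y ^ 2 / 3)) x v
      = (1 - 2 * f x ^ 2) * fderiv ℝ f x v := by
  have h := hf.hasFDerivAt
  have h2 : HasFDerivAt (fun y => f y * (1 - 2 * f y ^ 2 / 3))
      ((1 - 2 * f x ^ 2) • fderiv ℝ f x) x := by
    have heq : (fun y => f y * (1 - 2 * f y ^ 2 / 3))
        = fun y => f y + (-2/3 : ℝ) • (f y * (f y * f y)) := by
      funext y; simp [smul_eq_mul]; ring
    rw [heq]
    have := h.add ((h.mul (h.mul h)).const_smul (-2/3 : ℝ))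
    refine this.congr_fderiv ?_
    ext <;> simp [smul_eq_mul] <;> ring
  rw [h2.fderiv]
  simp [smul_eq_mul]

lemma keyn (f : ℝ × ℝ → ℝ) (x : ℝ × ℝ) (hf : DifferentiableAt ℝ f x) (v : ℝ × ℝ) :
    fderiv ℝ (fun y => -f y * (1 - 2 * f y ^ 2 / 3)) x v
      = -((1 - 2 * f x ^ 2) * fderiv ℝ f x v) := by
  have heq : (fun y => -f y * (1 - 2 * f y ^ 2 / 3))
      = fun y => -(f y * (1 - 2 * f y ^ 2 / 3)) := by funext y; ring
  rw [heq, fderiv_fun_neg, ← keyd f x hf v]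
  simp

theorem stmt3 (w : ℝ × ℝ → ℝ × ℝ) (hw : ContDiff ℝ 1 w) (x : ℝ × ℝ) :
    pd1 (fun y => (JKS2 (w y)).1) x + pd2 (fun y => (JKS2 (w y)).2) x
      = ((w x).1 ^ 2 - (w x).2 ^ 2)
          * (pd1 (fun y => (w y).1) x + pd2 (fun y => (w y).2) x)
        + (pd2 (fun y => (w y).2) x - pd1 (fun y => (w y).1) x)
          * (1 - ((w x).1 ^ 2 + (w x).2 ^ 2)) := by
  have hw1 : DifferentiableAt ℝ (fun y => (w y).1) x :=
    ((hw.differentiable one_ne_zero) x).fst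
  have hw2 : DifferentiableAt ℝ (fun y => (w y).2) x :=
    ((hw.differentiable one_ne_zero) x).snd
  have e1 : pd1 (fun y => (JKS2 (w y)).1) x
      = -((1 - 2 * (w x).1 ^ 2) * pd1 (fun y => (w y).1) x) :=
    keyn (fun y => (w y).1) x hw1 (1, 0)
  have e2 : pd2 (fun y => (JKS2 (w y)).2) x
      = (1 - 2 * (w x).2 ^ 2) * pd2 (fun y => (w y).2) x :=
    keyd (fun y => (w y).2) x hw2 (0, 1)
  rw [e1, e2]; ring
end
end

section
/- For any smooth (C¹) map w : ℝ² → ℝ² with |w| = 1 everywhere, div w = -2w₁w₂ · div Σ₁(w) + (w₁² - w₂²) · div Σ₂(w) pointwise. -/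
noncomputable section
open Real

/-!
On the unit circle the Jacobians of both entropies are multiples of the identity:
`DΣ₁(a, b) = -2ab · I` (its off-diagonal entries are `1 - a² - b²`) and
`DΣ₂(a, b) = diag(2a² - 1, 1 - 2b²) = (a² - b²) · I`. By the chain rule,
`div Σᵢ(w) = λᵢ(w) div w` with `λ₁ = -2w₁w₂`, `λ₂ = w₁² - w₂²`, and `λ₁² + λ₂² = |w|⁴ = 1`.
-/

def divergence (F : ℝ × ℝ → ℝ × ℝ) (x : ℝ × ℝ) : ℝ :=
  pd1 (fun y => (F y).1) x + pd2 (fun y => (F y).2) x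

theorem divergence_comp_of_hasFDerivAt_smul_id {F w : ℝ × ℝ → ℝ × ℝ} {x : ℝ × ℝ} {c : ℝ}
    (hF : HasFDerivAt F (c • ContinuousLinearMap.id ℝ (ℝ × ℝ)) (w x))
    (hw : DifferentiableAt ℝ w x) :
    divergence (fun y => F (w y)) x = c * divergence w x := by
  have hFw : HasFDerivAt (fun y => F (w y)) (c • fderiv ℝ w x) x := by
    have h := hF.comp x hw.hasFDerivAt
    rwa [ContinuousLinearMap.smul_comp, ContinuousLinearMap.id_comp] at h
  simp only [divergence, pd1, pd2, hFw.fst.fderiv, hFw.snd.fderiv, hw.hasFDerivAt.fst.fderiv,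
    hw.hasFDerivAt.snd.fderiv, ContinuousLinearMap.comp_apply, smul_apply,
    ContinuousLinearMap.coe_fst', ContinuousLinearMap.coe_snd', Prod.smul_fst, Prod.smul_snd,
    smul_eq_mul]
  ring

theorem hasFDerivAt_JKS1 {p : ℝ × ℝ} (hp : p.1 ^ 2 + p.2 ^ 2 = 1) :
    HasFDerivAt JKS1 ((-2 * p.1 * p.2) • ContinuousLinearMap.id ℝ (ℝ × ℝ)) p := by
  have ha : HasFDerivAt (fun q : ℝ × ℝ => q.1) (ContinuousLinearMap.fst ℝ ℝ ℝ) p := hasFDerivAt_fst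
  have hb : HasFDerivAt (fun q : ℝ × ℝ => q.2) (ContinuousLinearMap.snd ℝ ℝ ℝ) p := hasFDerivAt_snd
  have h :=
    (hb.mul (((hasFDerivAt_const 1 p).sub (ha.pow 2)).sub ((hb.pow 2).mul_const 3⁻¹))).prodMk
    (ha.mul (((hasFDerivAt_const 1 p).sub (hb.pow 2)).sub ((ha.pow 2).mul_const 3⁻¹)))
  refine h.congr_fderiv ?_
  ext <;> simp only [ContinuousLinearMap.comp_apply, ContinuousLinearMap.inl_apply,
      ContinuousLinearMap.inr_apply, ContinuousLinearMap.prod_apply, add_apply, smul_apply,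
      sub_apply, zero_apply, ContinuousLinearMap.coe_fst', ContinuousLinearMap.coe_snd',
      ContinuousLinearMap.id_apply, Pi.sub_apply, Prod.smul_mk, smul_eq_mul, nsmul_eq_mul]
    <;> linarith

theorem hasFDerivAt_JKS2 {p : ℝ × ℝ} (hp : p.1 ^ 2 + p.2 ^ 2 = 1) :
    HasFDerivAt JKS2 ((p.1 ^ 2 - p.2 ^ 2) • ContinuousLinearMap.id ℝ (ℝ × ℝ)) p := by
  have ha : HasFDerivAt (fun q : ℝ × ℝ => q.1) (ContinuousLinearMap.fst ℝ ℝ ℝ) p := hasFDerivAt_fst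
  have hb : HasFDerivAt (fun q : ℝ × ℝ => q.2) (ContinuousLinearMap.snd ℝ ℝ ℝ) p := hasFDerivAt_snd
  have h :=
    (ha.neg.mul ((hasFDerivAt_const 1 p).sub (((ha.pow 2).const_mul 2).mul_const 3⁻¹))).prodMk
    (hb.mul ((hasFDerivAt_const 1 p).sub (((hb.pow 2).const_mul 2).mul_const 3⁻¹)))
  refine h.congr_fderiv ?_
  ext <;> simp only [ContinuousLinearMap.comp_apply, ContinuousLinearMap.inl_apply,
      ContinuousLinearMap.inr_apply, ContinuousLinearMap.prod_apply, add_apply, smul_apply,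
      sub_apply, neg_apply, zero_apply, ContinuousLinearMap.coe_fst', ContinuousLinearMap.coe_snd',
      ContinuousLinearMap.id_apply, Pi.neg_apply, Pi.sub_apply, Prod.smul_mk, smul_eq_mul,
      nsmul_eq_mul]
    <;> linarith

theorem stmt4 (w : ℝ × ℝ → ℝ × ℝ) (hw : ContDiff ℝ 1 w)
    (hw1 : ∀ x, (w x).1 ^ 2 + (w x).2 ^ 2 = 1) (x : ℝ × ℝ) :
    pd1 (fun y => (w y).1) x + pd2 (fun y => (w y).2) x
      = -2 * (w x).1 * (w x).2
          * (pd1 (fun y => (JKS1 (w y)).1) x + pd2 (fun y => (JKS1 (w y)).2) x)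
        + ((w x).1 ^ 2 - (w x).2 ^ 2)
          * (pd1 (fun y => (JKS2 (w y)).1) x + pd2 (fun y => (JKS2 (w y)).2) x) := by
  have hwx : DifferentiableAt ℝ w x := hw.differentiable one_ne_zero x
  change divergence w x
    = -2 * (w x).1 * (w x).2 * divergence (fun y => JKS1 (w y)) x
      + ((w x).1 ^ 2 - (w x).2 ^ 2) * divergence (fun y => JKS2 (w y)) x
  rw [divergence_comp_of_hasFDerivAt_smul_id (hasFDerivAt_JKS1 (hw1 x)) hwx,
    divergence_comp_of_hasFDerivAt_smul_id (hasFDerivAt_JKS2 (hw1 x)) hwx]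
  linear_combination (-((w x).1 ^ 2 + (w x).2 ^ 2 + 1) * divergence w x) * hw1 x
end
end

section
/- For every smooth vector field w : ℝ² → ℝ², div w = G₁(w) div Σ₁(w) + G₂(w) div Σ₂(w) + L(w)[∇w](1 - |w|²), where G₁(w) = -2w₁w₂, G₂(w) = w₁² - w₂², and L(w)[∇w] = (1+|w|²) div w + 2w₁w₂(∂₁w₂ + ∂₂w₁) + (w₂² - w₁²)(∂₂w₂ - ∂₁w₁). -/
/-! By the chain rule, `div Σ₁(w) = G₁(w) div w + (1 - |w|²)(∂₁w₂ + ∂₂w₁)` and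
`div Σ₂(w) = G₂(w) div w + (1 - |w|²)(∂₂w₂ - ∂₁w₁)`. The remainders are cancelled by the
non-divergence part of `L(w)[∇w](1 - |w|²)`, and since `G₁² + G₂² = |w|⁴` what is left is
`|w|⁴ div w + (1 - |w|⁴) div w = div w`. -/

noncomputable section
open Real

section
open ContinuousLinearMap

theorem divergence_JKS1_comp {w : ℝ × ℝ → ℝ × ℝ} {x : ℝ × ℝ} (hw : DifferentiableAt ℝ w x) :
    divergence (fun y => JKS1 (w y)) x
      = -2 * (w x).1 * (w x).2 * divergence w x
        + (1 - ((w x).1 ^ 2 + (w x).2 ^ 2))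
          * (pd1 (fun y => (w y).2) x + pd2 (fun y => (w y).1) x) := by
  simp (disch := fun_prop) only [divergence, pd1, pd2, JKS1, div_eq_mul_inv, fderiv_fun_mul,
    fderiv_fun_sub, fderiv_fun_pow, fderiv_fun_const, add_apply, sub_apply, smul_apply,
    zero_apply, Pi.zero_apply, smul_eq_mul, nsmul_eq_mul]
  ring

theorem divergence_JKS2_comp {w : ℝ × ℝ → ℝ × ℝ} {x : ℝ × ℝ} (hw : DifferentiableAt ℝ w x) :
    divergence (fun y => JKS2 (w y)) x
      = ((w x).1 ^ 2 - (w x).2 ^ 2) * divergence w x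
        + (1 - ((w x).1 ^ 2 + (w x).2 ^ 2))
          * (pd2 (fun y => (w y).2) x - pd1 (fun y => (w y).1) x) := by
  simp (disch := fun_prop) only [divergence, pd1, pd2, JKS2, div_eq_mul_inv, fderiv_fun_mul,
    fderiv_fun_sub, fderiv_fun_pow, fderiv_fun_const, fderiv_fun_neg, add_apply, sub_apply,
    smul_apply, zero_apply, Pi.zero_apply, neg_apply, smul_eq_mul, nsmul_eq_mul]
  ring

end

theorem stmt5 (w : ℝ × ℝ → ℝ × ℝ) (hw : ContDiff ℝ 1 w) (x : ℝ × ℝ) :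
    pd1 (fun y => (w y).1) x + pd2 (fun y => (w y).2) x
      = (-2 * (w x).1 * (w x).2)
          * (pd1 (fun y => (JKS1 (w y)).1) x + pd2 (fun y => (JKS1 (w y)).2) x)
        + ((w x).1 ^ 2 - (w x).2 ^ 2)
          * (pd1 (fun y => (JKS2 (w y)).1) x + pd2 (fun y => (JKS2 (w y)).2) x)
        + ((1 + ((w x).1 ^ 2 + (w x).2 ^ 2))
              * (pd1 (fun y => (w y).1) x + pd2 (fun y => (w y).2) x)
            + 2 * (w x).1 * (w x).2
              * (pd1 (fun y => (w y).2) x + pd2 (fun y => (w y).1) x)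
            + ((w x).2 ^ 2 - (w x).1 ^ 2)
              * (pd2 (fun y => (w y).2) x - pd1 (fun y => (w y).1) x))
          * (1 - ((w x).1 ^ 2 + (w x).2 ^ 2)) := by
  have hwx : DifferentiableAt ℝ w x := hw.differentiable one_ne_zero x
  have hdiv₁ := divergence_JKS1_comp hwx
  have hdiv₂ := divergence_JKS2_comp hwx
  simp only [divergence] at hdiv₁ hdiv₂
  rw [hdiv₁, hdiv₂]
  ring
end
end

section
/- Let φ ∈ C³(B̄₁) be harmonic in B₁ and define the harmonic entropy Φ^φ(z) = φ(z)z + ((iz)·∇φ(z)) iz. Then for every smooth map w : Ω → B̄₁ one has div Φ^φ(w) = A^φ(w) div w + div((|w|²-1) B^φ(w)) + ∂₂B₁^φ(w) div Σ₁(w) − ∂₁B₁^φ(w) div Σ₂(w), where A^φ and B^φ are the explicit expressions: A^φ(z) = φ − z₁∂₁φ − z₂∂₂φ + z₁z₂[∂₁₂φ − z₂∂₁₁₁φ + z₁∂₂₁₁φ] + (1/2)(z₁²−z₂²)[∂₁₁φ + z₂∂₁₁₂φ + z₁∂₁₁₁φ], and B^φ(z) = (∂₁φ + (1/2)z₂∂₁₂φ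 − (1/2)z₁∂₂₂φ, ∂₂φ − (1/2)z₂∂₁₁φ + (1/2)z₁∂₁₂φ). -/
noncomputable section
open Real

/-- The entropy `Φ^φ(z) = φ(z) z + ((iz)·∇φ(z)) iz`. -/
def PhiEnt (φ : ℝ × ℝ → ℝ) (z : ℝ × ℝ) : ℝ × ℝ :=
  (φ z * z.1 - (-z.2 * pd1 φ z + z.1 * pd2 φ z) * z.2,
   φ z * z.2 + (-z.2 * pd1 φ z + z.1 * pd2 φ z) * z.1)

/-- The coefficient `A^φ`. -/
def Aent (φ : ℝ × ℝ → ℝ) (z : ℝ × ℝ) : ℝ :=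
  φ z - z.1 * pd1 φ z - z.2 * pd2 φ z
    + z.1 * z.2 * (pd1 (pd2 φ) z - z.2 * pd1 (pd1 (pd1 φ)) z
        + z.1 * pd2 (pd1 (pd1 φ)) z)
    + (1 / 2) * (z.1 ^ 2 - z.2 ^ 2) * (pd1 (pd1 φ) z
        + z.2 * pd1 (pd1 (pd2 φ)) z + z.1 * pd1 (pd1 (pd1 φ)) z)

/-- First component of the coefficient `B^φ`. -/
def Bent1 (φ : ℝ × ℝ → ℝ) (z : ℝ × ℝ) : ℝ :=
  pd1 φ z + (1 / 2) * z.2 * pd1 (pd2 φ) z - (1 / 2) * z.1 * pd2 (pd2 φ) z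

/-- Second component of the coefficient `B^φ`. -/
def Bent2 (φ : ℝ × ℝ → ℝ) (z : ℝ × ℝ) : ℝ :=
  pd2 φ z - (1 / 2) * z.2 * pd1 (pd1 φ) z + (1 / 2) * z.1 * pd1 (pd2 φ) z

lemma clm_eq (L : (ℝ × ℝ) →L[ℝ] ℝ) (v : ℝ × ℝ) :
    L v = v.1 * L (1, 0) + v.2 * L (0, 1) := by
  have h : v = v.1 • ((1 : ℝ), (0 : ℝ)) + v.2 • ((0 : ℝ), (1 : ℝ)) := by
    simp [Prod.ext_iff]
  rw [h, map_add, map_smul, map_smul, smul_eq_mul, smul_eq_mul]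
  simp [h.symm]

def HasPD (F : ℝ × ℝ → ℝ) (z : ℝ × ℝ) (a b : ℝ) : Prop :=
  HasFDerivAt F (a • ContinuousLinearMap.fst ℝ ℝ ℝ + b • ContinuousLinearMap.snd ℝ ℝ ℝ) z

lemma HasPD.eq_pd1 {F z a b} (h : HasPD F z a b) : pd1 F z = a := by
  simp [pd1, h.fderiv]

lemma HasPD.eq_pd2 {F z a b} (h : HasPD F z a b) : pd2 F z = b := by
  simp [pd2, h.fderiv]

lemma hasPD_of_diff {F : ℝ × ℝ → ℝ} {z} (h : DifferentiableAt ℝ F z) :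
    HasPD F z (pd1 F z) (pd2 F z) := by
  have : fderiv ℝ F z = pd1 F z • ContinuousLinearMap.fst ℝ ℝ ℝ
      + pd2 F z • ContinuousLinearMap.snd ℝ ℝ ℝ := by
    apply ContinuousLinearMap.ext
    intro v
    rw [clm_eq (fderiv ℝ F z) v]
    simp [pd1, pd2, mul_comm]
  unfold HasPD
  rw [← this]
  exact h.hasFDerivAt

lemma hasPD_const (c : ℝ) (z : ℝ × ℝ) : HasPD (fun _ => c) z 0 0 := by
  unfold HasPD
  simpa using hasFDerivAt_const c z

lemma hasPD_fst (z : ℝ × ℝ) : HasPD (fun y => y.1) z 1 0 := by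
  unfold HasPD
  have h := (ContinuousLinearMap.fst ℝ ℝ ℝ).hasFDerivAt (x := z)
  refine h.congr_fderiv ?_
  ext v <;> simp

lemma hasPD_snd (z : ℝ × ℝ) : HasPD (fun y => y.2) z 0 1 := by
  unfold HasPD
  have h := (ContinuousLinearMap.snd ℝ ℝ ℝ).hasFDerivAt (x := z)
  refine h.congr_fderiv ?_
  ext v <;> simp

lemma HasPD.add {F G : ℝ × ℝ → ℝ} {z a b c d} (hF : HasPD F z a b) (hG : HasPD G z c d) :
    HasPD (fun y => F y + G y) z (a + c) (b + d) := by
  unfold HasPD at *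
  refine (hF.add hG).congr_fderiv ?_
  ext v <;> simp <;> ring

lemma HasPD.neg {F : ℝ × ℝ → ℝ} {z a b} (hF : HasPD F z a b) :
    HasPD (fun y => -F y) z (-a) (-b) := by
  unfold HasPD at *
  refine hF.neg.congr_fderiv ?_
  ext v <;> simp <;> ring

lemma HasPD.sub {F G : ℝ × ℝ → ℝ} {z a b c d} (hF : HasPD F z a b) (hG : HasPD G z c d) :
    HasPD (fun y => F y - G y) z (a - c) (b - d) := by
  unfold HasPD at *
  refine (hF.sub hG).congr_fderiv ?_
  ext v <;> simp <;> ring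

lemma HasPD.mul {F G : ℝ × ℝ → ℝ} {z a b c d} (hF : HasPD F z a b) (hG : HasPD G z c d) :
    HasPD (fun y => F y * G y) z (a * G z + F z * c) (b * G z + F z * d) := by
  unfold HasPD at *
  refine (hF.mul hG).congr_fderiv ?_
  ext v <;> simp <;> ring

lemma HasPD.congr {F : ℝ × ℝ → ℝ} {z a b} (G : ℝ × ℝ → ℝ) (hF : HasPD F z a b)
    (he : ∀ y, G y = F y) : HasPD G z a b :=
  HasFDerivAt.congr_of_eventuallyEq hF (Filter.Eventually.of_forall he)

lemma pd_comp1 {F : ℝ × ℝ → ℝ} {w : ℝ × ℝ → ℝ × ℝ} {x : ℝ × ℝ} {a b : ℝ}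
    (hw : DifferentiableAt ℝ w x) (hF : HasPD F (w x) a b) :
    pd1 (fun y => F (w y)) x
      = a * pd1 (fun y => (w y).1) x + b * pd1 (fun y => (w y).2) x := by
  have hcomp : HasFDerivAt (fun y => F (w y))
      ((a • ContinuousLinearMap.fst ℝ ℝ ℝ + b • ContinuousLinearMap.snd ℝ ℝ ℝ).comp
        (fderiv ℝ w x)) x := hF.comp x hw.hasFDerivAt
  have h1 : HasFDerivAt (fun y => (w y).1)
      ((ContinuousLinearMap.fst ℝ ℝ ℝ).comp (fderiv ℝ w x)) x :=
    (ContinuousLinearMap.fst ℝ ℝ ℝ).hasFDerivAt.comp x hw.hasFDerivAt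
  have h2 : HasFDerivAt (fun y => (w y).2)
      ((ContinuousLinearMap.snd ℝ ℝ ℝ).comp (fderiv ℝ w x)) x :=
    (ContinuousLinearMap.snd ℝ ℝ ℝ).hasFDerivAt.comp x hw.hasFDerivAt
  simp only [pd1, hcomp.fderiv, h1.fderiv, h2.fderiv]
  simp

lemma pd_comp2 {F : ℝ × ℝ → ℝ} {w : ℝ × ℝ → ℝ × ℝ} {x : ℝ × ℝ} {a b : ℝ}
    (hw : DifferentiableAt ℝ w x) (hF : HasPD F (w x) a b) :
    pd2 (fun y => F (w y)) x
      = a * pd2 (fun y => (w y).1) x + b * pd2 (fun y => (w y).2) x := by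
  have hcomp : HasFDerivAt (fun y => F (w y))
      ((a • ContinuousLinearMap.fst ℝ ℝ ℝ + b • ContinuousLinearMap.snd ℝ ℝ ℝ).comp
        (fderiv ℝ w x)) x := hF.comp x hw.hasFDerivAt
  have h1 : HasFDerivAt (fun y => (w y).1)
      ((ContinuousLinearMap.fst ℝ ℝ ℝ).comp (fderiv ℝ w x)) x :=
    (ContinuousLinearMap.fst ℝ ℝ ℝ).hasFDerivAt.comp x hw.hasFDerivAt
  have h2 : HasFDerivAt (fun y => (w y).2)
      ((ContinuousLinearMap.snd ℝ ℝ ℝ).comp (fderiv ℝ w x)) x :=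
    (ContinuousLinearMap.snd ℝ ℝ ℝ).hasFDerivAt.comp x hw.hasFDerivAt
  simp only [pd2, hcomp.fderiv, h1.fderiv, h2.fderiv]
  simp

lemma contDiff_pd1 {n : ℕ} {f : ℝ × ℝ → ℝ} (h : ContDiff ℝ (n + 1 : ℕ) f) :
    ContDiff ℝ (n : ℕ) (pd1 f) := by
  have hf : ContDiff ℝ (n : ℕ) (fderiv ℝ f) :=
    h.fderiv_right (by exact_mod_cast le_refl (n + 1 : ℕ∞))
  exact (ContinuousLinearMap.apply ℝ ℝ ((1 : ℝ), (0 : ℝ))).contDiff.comp hf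

lemma contDiff_pd2 {n : ℕ} {f : ℝ × ℝ → ℝ} (h : ContDiff ℝ (n + 1 : ℕ) f) :
    ContDiff ℝ (n : ℕ) (pd2 f) := by
  have hf : ContDiff ℝ (n : ℕ) (fderiv ℝ f) :=
    h.fderiv_right (by exact_mod_cast le_refl (n + 1 : ℕ∞))
  exact (ContinuousLinearMap.apply ℝ ℝ ((0 : ℝ), (1 : ℝ))).contDiff.comp hf

lemma pd_symm {g : ℝ × ℝ → ℝ} (hg : ContDiff ℝ 2 g) (z : ℝ × ℝ) :
    pd2 (pd1 g) z = pd1 (pd2 g) z := by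
  have hdiff : ∀ y, HasFDerivAt g (fderiv ℝ g y) y := fun y =>
    (hg.differentiable (by norm_num) y).hasFDerivAt
  have hd2 : Differentiable ℝ (fderiv ℝ g) := by
    have : ContDiff ℝ 1 (fderiv ℝ g) := hg.fderiv_right (by norm_num)
    exact this.differentiable one_ne_zero
  have hsym := second_derivative_symmetric hdiff (hd2 z).hasFDerivAt
  have key : ∀ v u : ℝ × ℝ, fderiv ℝ (fun y => fderiv ℝ g y v) z u
      = fderiv ℝ (fderiv ℝ g) z u v := by
    intro v u
    have : fderiv ℝ (fun y => fderiv ℝ g y v) z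
        = (fderiv ℝ (fderiv ℝ g) z).flip v := by
      have := fderiv_clm_apply (c := fderiv ℝ g) (u := fun _ => v) (hd2 z)
        (differentiableAt_const v)
      simpa using this
    rw [this]; rfl
  exact ((key ((1 : ℝ), (0 : ℝ)) ((0 : ℝ), (1 : ℝ))).trans
    (hsym ((0 : ℝ), (1 : ℝ)) ((1 : ℝ), (0 : ℝ)))).trans
    (key ((0 : ℝ), (1 : ℝ)) ((1 : ℝ), (0 : ℝ))).symm

lemma fderiv_zero_of_zero_on_ball {g : ℝ × ℝ → ℝ} (hg : Differentiable ℝ g)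
    (h0 : ∀ z ∈ Metric.closedBall (0 : ℝ × ℝ) 1, g z = 0)
    {z : ℝ × ℝ} (hz : z ∈ Metric.closedBall (0 : ℝ × ℝ) 1) :
    fderiv ℝ g z = 0 := by
  have hconv : Convex ℝ (Metric.closedBall (0 : ℝ × ℝ) 1) := convex_closedBall _ _
  have hne : (interior (Metric.closedBall (0 : ℝ × ℝ) 1)).Nonempty := by
    rw [interior_closedBall _ (one_ne_zero)]
    exact ⟨0, by simp⟩
  have hud : UniqueDiffOn ℝ (Metric.closedBall (0 : ℝ × ℝ) 1) :=
    uniqueDiffOn_convex hconv hne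
  have h1 : fderivWithin ℝ g (Metric.closedBall (0 : ℝ × ℝ) 1) z = fderiv ℝ g z :=
    (hg z).fderivWithin (hud z hz)
  have h2 : fderivWithin ℝ g (Metric.closedBall (0 : ℝ × ℝ) 1) z
      = fderivWithin ℝ (fun _ => (0 : ℝ)) (Metric.closedBall (0 : ℝ × ℝ) 1) z :=
    fderivWithin_congr (fun y hy => h0 y hy) (h0 z hz)
  rw [← h1, h2, fderivWithin_const_apply _]


set_option maxHeartbeats 4000000 in
theorem stmt11 (φ : ℝ × ℝ → ℝ) (hφ : ContDiff ℝ 3 φ)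
    (hharm : ∀ z ∈ Metric.closedBall (0 : ℝ × ℝ) 1,
      pd1 (pd1 φ) z + pd2 (pd2 φ) z = 0)
    (w : ℝ × ℝ → ℝ × ℝ) (hw : ContDiff ℝ (⊤ : ℕ∞) w)
    (hw1 : ∀ x, w x ∈ Metric.closedBall (0 : ℝ × ℝ) 1) (x : ℝ × ℝ) :
    pd1 (fun y => (PhiEnt φ (w y)).1) x + pd2 (fun y => (PhiEnt φ (w y)).2) x
      = Aent φ (w x) * (pd1 (fun y => (w y).1) x + pd2 (fun y => (w y).2) x)
        + (pd1 (fun y => ((w y).1 ^ 2 + (w y).2 ^ 2 - 1) * Bent1 φ (w y)) x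
            + pd2 (fun y => ((w y).1 ^ 2 + (w y).2 ^ 2 - 1) * Bent2 φ (w y)) x)
        + pd2 (Bent1 φ) (w x)
            * (pd1 (fun y => (JKS1 (w y)).1) x + pd2 (fun y => (JKS1 (w y)).2) x)
        - pd1 (Bent1 φ) (w x)
            * (pd1 (fun y => (JKS2 (w y)).1) x + pd2 (fun y => (JKS2 (w y)).2) x) := by
  have hφ2 : ContDiff ℝ 2 φ := hφ.of_le (by norm_num)
  have hw' : DifferentiableAt ℝ w x := (hw.differentiable (by simp)).differentiableAt
  have c1 : ContDiff ℝ (2 : ℕ) (pd1 φ) := contDiff_pd1 (n := 2) (by exact_mod_cast hφ)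
  have c2 : ContDiff ℝ (2 : ℕ) (pd2 φ) := contDiff_pd2 (n := 2) (by exact_mod_cast hφ)
  have c11 : ContDiff ℝ (1 : ℕ) (pd1 (pd1 φ)) := contDiff_pd1 (n := 1) (by exact_mod_cast c1)
  have c12 : ContDiff ℝ (1 : ℕ) (pd1 (pd2 φ)) := contDiff_pd1 (n := 1) (by exact_mod_cast c2)
  have c22 : ContDiff ℝ (1 : ℕ) (pd2 (pd2 φ)) := contDiff_pd2 (n := 1) (by exact_mod_cast c2)
  have d11 : Differentiable ℝ (pd1 (pd1 φ)) := c11.differentiable (by norm_num)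
  have d12 : Differentiable ℝ (pd1 (pd2 φ)) := c12.differentiable (by norm_num)
  have d22 : Differentiable ℝ (pd2 (pd2 φ)) := c22.differentiable (by norm_num)
  -- HasPD facts at w x
  have hp : HasPD φ (w x) (pd1 φ (w x)) (pd2 φ (w x)) :=
    hasPD_of_diff ((hφ.differentiable (by norm_num)) (w x))
  have hp1 : HasPD (pd1 φ) (w x) (pd1 (pd1 φ) (w x)) (pd2 (pd1 φ) (w x)) :=
    hasPD_of_diff ((c1.differentiable (by norm_num)) (w x))
  have hp2 : HasPD (pd2 φ) (w x) (pd1 (pd2 φ) (w x)) (pd2 (pd2 φ) (w x)) :=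
    hasPD_of_diff ((c2.differentiable (by norm_num)) (w x))
  have hp11 : HasPD (pd1 (pd1 φ)) (w x) (pd1 (pd1 (pd1 φ)) (w x)) (pd2 (pd1 (pd1 φ)) (w x)) :=
    hasPD_of_diff (d11 (w x))
  have hp12 : HasPD (pd1 (pd2 φ)) (w x) (pd1 (pd1 (pd2 φ)) (w x)) (pd2 (pd1 (pd2 φ)) (w x)) :=
    hasPD_of_diff (d12 (w x))
  have hp22 : HasPD (pd2 (pd2 φ)) (w x) (pd1 (pd2 (pd2 φ)) (w x)) (pd2 (pd2 (pd2 φ)) (w x)) :=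
    hasPD_of_diff (d22 (w x))
  have hcf := hasPD_fst (w x)
  have hcs := hasPD_snd (w x)
  -- composite HasPD facts
  have hF1 := HasPD.congr (fun z => (PhiEnt φ z).1)
    ((hp.mul hcf).sub (((hcs.neg.mul hp1).add (hcf.mul hp2)).mul hcs))
    (fun y => by simp only [PhiEnt]; try ring)
  have hF2 := HasPD.congr (fun z => (PhiEnt φ z).2)
    ((hp.mul hcs).add (((hcs.neg.mul hp1).add (hcf.mul hp2)).mul hcf))
    (fun y => by simp only [PhiEnt]; try ring)
  have hB1 := HasPD.congr (Bent1 φ)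
    ((hp1.add (((hasPD_const (1/2) (w x)).mul hcs).mul hp12)).sub
      (((hasPD_const (1/2) (w x)).mul hcf).mul hp22))
    (fun y => by simp only [Bent1]; try ring)
  have hB2 := HasPD.congr (Bent2 φ)
    ((hp2.sub (((hasPD_const (1/2) (w x)).mul hcs).mul hp11)).add
      (((hasPD_const (1/2) (w x)).mul hcf).mul hp12))
    (fun y => by simp only [Bent2]; try ring)
  have hM1 := HasPD.congr (fun z => (z.1 ^ 2 + z.2 ^ 2 - 1) * Bent1 φ z)
    ((((hcf.mul hcf).add (hcs.mul hcs)).sub (hasPD_const 1 (w x))).mul hB1)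
    (fun y => by ring)
  have hM2 := HasPD.congr (fun z => (z.1 ^ 2 + z.2 ^ 2 - 1) * Bent2 φ z)
    ((((hcf.mul hcf).add (hcs.mul hcs)).sub (hasPD_const 1 (w x))).mul hB2)
    (fun y => by ring)
  have hJ11 := HasPD.congr (fun z => (JKS1 z).1)
    (hcs.mul (((hasPD_const 1 (w x)).sub (hcf.mul hcf)).sub
      ((hcs.mul hcs).mul (hasPD_const (1/3) (w x)))))
    (fun y => by simp only [JKS1]; try ring)
  have hJ12 := HasPD.congr (fun z => (JKS1 z).2)
    (hcf.mul (((hasPD_const 1 (w x)).sub (hcs.mul hcs)).sub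
      ((hcf.mul hcf).mul (hasPD_const (1/3) (w x)))))
    (fun y => by simp only [JKS1]; try ring)
  have hJ21 := HasPD.congr (fun z => (JKS2 z).1)
    ((hcf.neg).mul ((hasPD_const 1 (w x)).sub
      ((hasPD_const (2/3) (w x)).mul (hcf.mul hcf))))
    (fun y => by simp only [JKS2]; try ring)
  have hJ22 := HasPD.congr (fun z => (JKS2 z).2)
    (hcs.mul ((hasPD_const 1 (w x)).sub
      ((hasPD_const (2/3) (w x)).mul (hcs.mul hcs))))
    (fun y => by simp only [JKS2]; try ring)
  -- chain rule equations
  have e1 := pd_comp1 hw' hF1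
  have e2 := pd_comp2 hw' hF2
  have e3 := pd_comp1 hw' hM1
  have e4 := pd_comp2 hw' hM2
  have e5 := pd_comp1 hw' hJ11
  have e6 := pd_comp2 hw' hJ12
  have e7 := pd_comp1 hw' hJ21
  have e8 := pd_comp2 hw' hJ22
  have e9 := hB1.eq_pd1
  have e10 := hB1.eq_pd2
  -- symmetry of derivatives
  have hsf : pd2 (pd1 φ) = pd1 (pd2 φ) := funext fun z => pd_symm hφ2 z
  have hs1 : pd2 (pd1 φ) (w x) = pd1 (pd2 φ) (w x) := pd_symm hφ2 (w x)
  have hs11 : pd2 (pd1 (pd1 φ)) (w x) = pd1 (pd1 (pd2 φ)) (w x) := by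
    have h := pd_symm (g := pd1 φ) (by exact_mod_cast c1) (w x)
    rw [hsf] at h
    exact h
  have hs12 : pd2 (pd1 (pd2 φ)) (w x) = pd1 (pd2 (pd2 φ)) (w x) :=
    pd_symm (g := pd2 φ) (by exact_mod_cast c2) (w x)
  -- harmonicity and its derivatives at w x
  have h22 : pd2 (pd2 φ) (w x) = -pd1 (pd1 φ) (w x) := by
    have := hharm (w x) (hw1 x); linarith
  have hgd : Differentiable ℝ (fun z => pd1 (pd1 φ) z + pd2 (pd2 φ) z) := d11.add d22
  have h0 := fderiv_zero_of_zero_on_ball hgd hharm (hw1 x)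
  have hz1 : pd1 (pd1 (pd1 φ)) (w x) + pd1 (pd2 (pd2 φ)) (w x) = 0 := by
    have h := ((hasPD_of_diff (d11 (w x))).add (hasPD_of_diff (d22 (w x)))).eq_pd1
    rw [← h]
    show fderiv ℝ (fun z => pd1 (pd1 φ) z + pd2 (pd2 φ) z) (w x) ((1 : ℝ), (0 : ℝ)) = 0
    rw [h0]
    simp
  have hz2 : pd2 (pd1 (pd1 φ)) (w x) + pd2 (pd2 (pd2 φ)) (w x) = 0 := by
    have h := ((hasPD_of_diff (d11 (w x))).add (hasPD_of_diff (d22 (w x)))).eq_pd2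
    rw [← h]
    show fderiv ℝ (fun z => pd1 (pd1 φ) z + pd2 (pd2 φ) z) (w x) ((0 : ℝ), (1 : ℝ)) = 0
    rw [h0]
    simp
  have r122 : pd1 (pd2 (pd2 φ)) (w x) = -pd1 (pd1 (pd1 φ)) (w x) := by linarith
  have r222 : pd2 (pd2 (pd2 φ)) (w x) = -pd1 (pd1 (pd2 φ)) (w x) := by
    rw [hs11] at hz2; linarith
  rw [e1, e2, e3, e4, e5, e6, e7, e8, e9, e10]
  simp only [Aent, Bent1, Bent2]
  rw [hs1, hs11, hs12, h22, r122, r222]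
  ring
end
end

section
/- Let F : Ω → ℝ² be Lipschitz on an open set Ω ⊂ ℝ² with DF(x) ∈ K a.e., where K = {P(θ)}. Define m = (−∂₁F₁ − ∂₂F₂, ∂₂F₁ − ∂₁F₂). Then |m| = 1 a.e., and at a.e. x, ∇F₁(x) = iΣ₁(m(x)) and ∇F₂(x) = iΣ₂(m(x)); in particular div Σ₁(m) = 0 and div Σ₂(m) = 0 in the sense of distributions. -/
noncomputable section
open Real MeasureTheory Filter Topology

/-- Counterclockwise rotation by π/2 in ℝ². -/
def rotI (v : ℝ × ℝ) : ℝ × ℝ := (-v.2, v.1)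

lemma slopeTendsto {h : ℝ → ℝ} {d : ℝ} (hh : HasDerivAt h d 0)
    {t : ℕ → ℝ} (ht : Tendsto t atTop (𝓝[≠] (0:ℝ))) :
    Tendsto (fun n => (h (t n) - h 0) / t n) atTop (𝓝 d) := by
  have h2 := (hasDerivAt_iff_tendsto_slope.mp hh).comp ht
  refine h2.congr fun n => ?_
  simp [Function.comp, slope_def_field]

lemma dqTendsto {f : ℝ × ℝ → ℝ} {x : ℝ × ℝ} (hf : DifferentiableAt ℝ f x) (v : ℝ × ℝ)
    {t : ℕ → ℝ} (ht : Tendsto t atTop (𝓝[≠] (0:ℝ))) :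
    Tendsto (fun n => (f (x + t n • v) - f x) / t n) atTop (𝓝 (fderiv ℝ f x v)) := by
  have hcurve : HasDerivAt (fun s : ℝ => x + s • v) v 0 := by
    simpa using ((hasDerivAt_id (0:ℝ)).smul_const v).const_add x
  have hf0 : HasFDerivAt f (fderiv ℝ f x) ((fun s : ℝ => x + s • v) 0) := by
    simp only [zero_smul, add_zero]; exact hf.hasFDerivAt
  have hD : HasDerivAt (fun s : ℝ => f (x + s • v)) (fderiv ℝ f x v) 0 :=
    hf0.comp_hasDerivAt 0 hcurve
  have h3 := slopeTendsto hD ht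
  refine h3.congr fun n => ?_
  simp only [zero_smul, add_zero]

lemma curl_integral_zero (g : ℝ × ℝ → ℝ) (L : NNReal) (hg : LipschitzWith L g)
    (ζ : ℝ × ℝ → ℝ) (hζ : ContDiff ℝ (⊤ : ℕ∞) ζ) (hζc : HasCompactSupport ζ) :
    ∫ x, (pd1 ζ x * pd2 g x - pd2 ζ x * pd1 g x) = 0 := by
  have hgc : Continuous g := hg.continuous
  have hf' : ContDiff ℝ (⊤ : ℕ∞) (fderiv ℝ ζ) := hζ.fderiv_right (by simp)
  have hφ1 : ContDiff ℝ (⊤ : ℕ∞) (pd1 ζ) := hf'.clm_apply contDiff_const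
  have hφ2 : ContDiff ℝ (⊤ : ℕ∞) (pd2 ζ) := hf'.clm_apply contDiff_const
  have hfz : ∀ y ∉ tsupport ζ, fderiv ℝ ζ y = 0 := fun y hy =>
    Function.notMem_support.mp (fun h => hy (support_fderiv_subset ℝ h))
  have hφ1c : HasCompactSupport (pd1 ζ) :=
    (hζc.fderiv ℝ).comp_left (g := fun l : (ℝ × ℝ) →L[ℝ] ℝ => l (1, 0)) rfl
  have hφ2c : HasCompactSupport (pd2 ζ) :=
    (hζc.fderiv ℝ).comp_left (g := fun l : (ℝ × ℝ) →L[ℝ] ℝ => l (0, 1)) rfl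
  obtain ⟨C1, hC1⟩ := hφ1.lipschitzWith_of_hasCompactSupport hφ1c (by simp)
  obtain ⟨C2, hC2⟩ := hφ2.lipschitzWith_of_hasCompactSupport hφ2c (by simp)
  have hK1c : IsCompact (Metric.cthickening 1 (tsupport ζ)) := hζc.cthickening
  obtain ⟨M, hM⟩ := hK1c.exists_bound_of_continuousOn hgc.continuousOn
  set t : ℕ → ℝ := fun n => 1 / (n + 1) with htdef
  have htpos : ∀ n, 0 < t n := fun n => by positivity
  have ht1 : ∀ n, t n ≤ 1 := fun n => by
    rw [htdef]; rw [div_le_one (by positivity)]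
    simpa using Nat.cast_nonneg (α := ℝ) n
  have ht0 : Tendsto t atTop (𝓝 (0:ℝ)) := tendsto_one_div_add_atTop_nhds_zero_nat
  have ht' : Tendsto t atTop (𝓝[≠] (0:ℝ)) :=
    tendsto_nhdsWithin_of_tendsto_nhds_of_eventually_within _ ht0
      (Eventually.of_forall fun n => (htpos n).ne')
  -- norms of the direction vectors
  have hnorm : ∀ a b : ℝ, ‖((a, b) : ℝ × ℝ)‖ = max |a| |b| := fun a b => by
    simp [Prod.norm_def, Real.norm_eq_abs]
  have quotBound : ∀ (f : ℝ × ℝ → ℝ) (C : NNReal), LipschitzWith C f → ∀ (v : ℝ × ℝ),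
      ‖v‖ = 1 → ∀ (n : ℕ) (x : ℝ × ℝ), |(f (x + t n • v) - f x) / t n| ≤ (C : ℝ) := by
    intro f C hf v hv n x
    have hd := hf.dist_le_mul (x + t n • v) x
    rw [dist_eq_norm, dist_eq_norm, add_sub_cancel_left, norm_smul, hv, mul_one] at hd
    rw [abs_div, abs_of_pos (htpos n), div_le_iff₀ (htpos n)]
    calc |f (x + t n • v) - f x| ≤ (C : ℝ) * ‖t n‖ := hd
      _ = (C : ℝ) * t n := by rw [Real.norm_eq_abs, abs_of_pos (htpos n)]
  -- integrability of basic pieces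
  have iφ1 : Integrable (pd1 ζ) := hφ1.continuous.integrable_of_hasCompactSupport hφ1c
  have iφ2 : Integrable (pd2 ζ) := hφ2.continuous.integrable_of_hasCompactSupport hφ2c
  -- the key identity
  have key : ∀ c : ℝ, c ≠ 0 →
      (∫ x : ℝ × ℝ, (pd1 ζ x * ((g (x + c • ((0:ℝ), (1:ℝ))) - g x) / c) -
        pd2 ζ x * ((g (x + c • ((1:ℝ), (0:ℝ))) - g x) / c))) =
      ∫ x : ℝ × ℝ, (((pd1 ζ (x + c • ((0:ℝ), (-1:ℝ))) - pd1 ζ x) / c) * g x -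
        ((pd2 ζ (x + c • ((-1:ℝ), (0:ℝ))) - pd2 ζ x) / c) * g x) := by
    intro c hc
    have vcancel : ∀ (v : ℝ × ℝ), ∀ x : ℝ × ℝ, x + c • v + c • (-v) = x := fun v x => by
      rw [add_assoc, ← smul_add, add_neg_cancel, smul_zero, add_zero]
    have i1 : Integrable (fun x : ℝ × ℝ => pd1 ζ x * g (x + c • ((0:ℝ), (1:ℝ)))) :=
      (hφ1.continuous.mul (hgc.comp (continuous_add_right _))).integrable_of_hasCompactSupport
        (hφ1c.mul_right)
    have i2 : Integrable (fun x : ℝ × ℝ => pd1 ζ x * g x) :=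
      (hφ1.continuous.mul hgc).integrable_of_hasCompactSupport (hφ1c.mul_right)
    have i3 : Integrable (fun x : ℝ × ℝ => pd2 ζ x * g (x + c • ((1:ℝ), (0:ℝ)))) :=
      (hφ2.continuous.mul (hgc.comp (continuous_add_right _))).integrable_of_hasCompactSupport
        (hφ2c.mul_right)
    have i4 : Integrable (fun x : ℝ × ℝ => pd2 ζ x * g x) :=
      (hφ2.continuous.mul hgc).integrable_of_hasCompactSupport (hφ2c.mul_right)
    have j1 : Integrable (fun x : ℝ × ℝ => pd1 ζ (x + c • ((0:ℝ), (-1:ℝ))) * g x) :=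
      ((hφ1.continuous.comp (continuous_add_right _)).mul hgc).integrable_of_hasCompactSupport
        ((hφ1c.comp_homeomorph (Homeomorph.addRight (c • ((0:ℝ), (-1:ℝ))))).mul_right)
    have j3 : Integrable (fun x : ℝ × ℝ => pd2 ζ (x + c • ((-1:ℝ), (0:ℝ))) * g x) :=
      ((hφ2.continuous.comp (continuous_add_right _)).mul hgc).integrable_of_hasCompactSupport
        ((hφ2c.comp_homeomorph (Homeomorph.addRight (c • ((-1:ℝ), (0:ℝ))))).mul_right)
    have i12 : Integrable (fun x : ℝ × ℝ =>
        pd1 ζ x * g (x + c • ((0:ℝ), (1:ℝ))) - pd1 ζ x * g x) := i1.sub i2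
    have i34 : Integrable (fun x : ℝ × ℝ =>
        pd2 ζ x * g (x + c • ((1:ℝ), (0:ℝ))) - pd2 ζ x * g x) := i3.sub i4
    have j12 : Integrable (fun x : ℝ × ℝ =>
        pd1 ζ (x + c • ((0:ℝ), (-1:ℝ))) * g x - pd1 ζ x * g x) := j1.sub i2
    have j34 : Integrable (fun x : ℝ × ℝ =>
        pd2 ζ (x + c • ((-1:ℝ), (0:ℝ))) * g x - pd2 ζ x * g x) := j3.sub i4
    have t1 : (∫ x : ℝ × ℝ, pd1 ζ x * g (x + c • ((0:ℝ), (1:ℝ)))) =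
        ∫ x : ℝ × ℝ, pd1 ζ (x + c • ((0:ℝ), (-1:ℝ))) * g x := by
      have h := integral_add_right_eq_self (μ := volume)
        (fun x : ℝ × ℝ => pd1 ζ (x + c • ((0:ℝ), (-1:ℝ))) * g x) (c • ((0:ℝ), (1:ℝ)))
      rw [← h]
      refine integral_congr_ae (Eventually.of_forall fun x => ?_)
      have : x + c • ((0:ℝ), (1:ℝ)) + c • ((0:ℝ), (-1:ℝ)) = x := by
        have : ((0:ℝ), (-1:ℝ)) = -((0:ℝ), (1:ℝ)) := by norm_num [Prod.ext_iff]
        rw [this]; exact vcancel _ x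
      simp only [this]
    have t3 : (∫ x : ℝ × ℝ, pd2 ζ x * g (x + c • ((1:ℝ), (0:ℝ)))) =
        ∫ x : ℝ × ℝ, pd2 ζ (x + c • ((-1:ℝ), (0:ℝ))) * g x := by
      have h := integral_add_right_eq_self (μ := volume)
        (fun x : ℝ × ℝ => pd2 ζ (x + c • ((-1:ℝ), (0:ℝ))) * g x) (c • ((1:ℝ), (0:ℝ)))
      rw [← h]
      refine integral_congr_ae (Eventually.of_forall fun x => ?_)
      have : x + c • ((1:ℝ), (0:ℝ)) + c • ((-1:ℝ), (0:ℝ)) = x := by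
        have : ((-1:ℝ), (0:ℝ)) = -((1:ℝ), (0:ℝ)) := by norm_num [Prod.ext_iff]
        rw [this]; exact vcancel _ x
      simp only [this]
    calc (∫ x : ℝ × ℝ, (pd1 ζ x * ((g (x + c • ((0:ℝ), (1:ℝ))) - g x) / c) -
            pd2 ζ x * ((g (x + c • ((1:ℝ), (0:ℝ))) - g x) / c)))
        = ∫ x : ℝ × ℝ, c⁻¹ * ((pd1 ζ x * g (x + c • ((0:ℝ), (1:ℝ))) - pd1 ζ x * g x) -
            (pd2 ζ x * g (x + c • ((1:ℝ), (0:ℝ))) - pd2 ζ x * g x)) :=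
          integral_congr_ae (Eventually.of_forall fun x => by field_simp)
      _ = c⁻¹ * (((∫ x : ℝ × ℝ, pd1 ζ x * g (x + c • ((0:ℝ), (1:ℝ)))) - ∫ x : ℝ × ℝ, pd1 ζ x * g x) -
            ((∫ x : ℝ × ℝ, pd2 ζ x * g (x + c • ((1:ℝ), (0:ℝ)))) - ∫ x : ℝ × ℝ, pd2 ζ x * g x)) := by
          rw [integral_const_mul, integral_sub i12 i34, integral_sub i1 i2,
            integral_sub i3 i4]
      _ = c⁻¹ * (((∫ x : ℝ × ℝ, pd1 ζ (x + c • ((0:ℝ), (-1:ℝ))) * g x) - ∫ x : ℝ × ℝ, pd1 ζ x * g x) -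
            ((∫ x : ℝ × ℝ, pd2 ζ (x + c • ((-1:ℝ), (0:ℝ))) * g x) - ∫ x : ℝ × ℝ, pd2 ζ x * g x)) := by
          rw [t1, t3]
      _ = ∫ x : ℝ × ℝ, c⁻¹ * ((pd1 ζ (x + c • ((0:ℝ), (-1:ℝ))) * g x - pd1 ζ x * g x) -
            (pd2 ζ (x + c • ((-1:ℝ), (0:ℝ))) * g x - pd2 ζ x * g x)) := by
          rw [integral_const_mul, integral_sub j12 j34, integral_sub j1 i2,
            integral_sub j3 i4]
      _ = ∫ x : ℝ × ℝ, (((pd1 ζ (x + c • ((0:ℝ), (-1:ℝ))) - pd1 ζ x) / c) * g x -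
            ((pd2 ζ (x + c • ((-1:ℝ), (0:ℝ))) - pd2 ζ x) / c) * g x) :=
          integral_congr_ae (Eventually.of_forall fun x => by field_simp)

  -- Clairaut symmetry for ζ
  have hsymm : ∀ x : ℝ × ℝ,
      fderiv ℝ (pd1 ζ) x ((0:ℝ), (1:ℝ)) = fderiv ℝ (pd2 ζ) x ((1:ℝ), (0:ℝ)) := by
    intro x
    have hs : IsSymmSndFDerivAt ℝ ζ x := (hζ.contDiffAt).isSymmSndFDerivAt (by rw [minSmoothness_of_isRCLikeNormedField]; exact WithTop.coe_le_coe.mpr le_top)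
    have hdf : DifferentiableAt ℝ (fderiv ℝ ζ) x := (hf'.differentiable (by simp)) x
    have e1 : fderiv ℝ (pd1 ζ) x = (fderiv ℝ (fderiv ℝ ζ) x).flip ((1:ℝ), (0:ℝ)) := by
      have h := fderiv_clm_apply (c := fderiv ℝ ζ) (u := fun _ => (((1:ℝ), (0:ℝ)) : ℝ × ℝ))
        (x := x) hdf (differentiableAt_const _)
      show fderiv ℝ (fun y => fderiv ℝ ζ y ((1:ℝ), (0:ℝ))) x = _
      simpa using h
    have e2 : fderiv ℝ (pd2 ζ) x = (fderiv ℝ (fderiv ℝ ζ) x).flip ((0:ℝ), (1:ℝ)) := by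
      have h := fderiv_clm_apply (c := fderiv ℝ ζ) (u := fun _ => (((0:ℝ), (1:ℝ)) : ℝ × ℝ))
        (x := x) hdf (differentiableAt_const _)
      show fderiv ℝ (fun y => fderiv ℝ ζ y ((0:ℝ), (1:ℝ))) x = _
      simpa using h
    rw [e1, e2]
    exact hs ((0:ℝ), (1:ℝ)) ((1:ℝ), (0:ℝ))
  -- limit of the left-hand sides
  have hA : Tendsto (fun n => ∫ x : ℝ × ℝ, (pd1 ζ x * ((g (x + t n • ((0:ℝ), (1:ℝ))) - g x) / t n) -
        pd2 ζ x * ((g (x + t n • ((1:ℝ), (0:ℝ))) - g x) / t n))) atTop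
      (𝓝 (∫ x : ℝ × ℝ, (pd1 ζ x * pd2 g x - pd2 ζ x * pd1 g x))) := by
    apply tendsto_integral_of_dominated_convergence
      (bound := fun x : ℝ × ℝ => (L : ℝ) * (|pd1 ζ x| + |pd2 ζ x|))
    · intro n
      exact ((hφ1.continuous.mul (((hgc.comp (continuous_add_right _)).sub hgc).div_const _)).sub
        (hφ2.continuous.mul
          (((hgc.comp (continuous_add_right _)).sub hgc).div_const _))).aestronglyMeasurable
    · exact (iφ1.abs.add iφ2.abs).const_mul _
    · intro n
      refine Eventually.of_forall fun x => ?_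
      have h2 : |(g (x + t n • ((0:ℝ), (1:ℝ))) - g x) / t n| ≤ (L : ℝ) :=
        quotBound g L hg _ (by rw [hnorm]; norm_num) n x
      have h1 : |(g (x + t n • ((1:ℝ), (0:ℝ))) - g x) / t n| ≤ (L : ℝ) :=
        quotBound g L hg _ (by rw [hnorm]; norm_num) n x
      calc ‖pd1 ζ x * ((g (x + t n • ((0:ℝ), (1:ℝ))) - g x) / t n) -
            pd2 ζ x * ((g (x + t n • ((1:ℝ), (0:ℝ))) - g x) / t n)‖
          ≤ ‖pd1 ζ x * ((g (x + t n • ((0:ℝ), (1:ℝ))) - g x) / t n)‖ +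
            ‖pd2 ζ x * ((g (x + t n • ((1:ℝ), (0:ℝ))) - g x) / t n)‖ := norm_sub_le _ _
        _ = |pd1 ζ x| * |(g (x + t n • ((0:ℝ), (1:ℝ))) - g x) / t n| +
            |pd2 ζ x| * |(g (x + t n • ((1:ℝ), (0:ℝ))) - g x) / t n| := by
            simp [Real.norm_eq_abs, abs_mul, abs_div]
        _ ≤ |pd1 ζ x| * (L : ℝ) + |pd2 ζ x| * (L : ℝ) :=
            add_le_add (mul_le_mul_of_nonneg_left h2 (abs_nonneg _))
              (mul_le_mul_of_nonneg_left h1 (abs_nonneg _))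
        _ = (L : ℝ) * (|pd1 ζ x| + |pd2 ζ x|) := by ring
    · filter_upwards [hg.ae_differentiableAt (μ := volume)] with x hx
      have l2 := (dqTendsto hx (((0:ℝ), (1:ℝ)) : ℝ × ℝ) ht').const_mul (pd1 ζ x)
      have l1 := (dqTendsto hx (((1:ℝ), (0:ℝ)) : ℝ × ℝ) ht').const_mul (pd2 ζ x)
      have := l2.sub l1
      simpa [pd1, pd2] using this
  -- limit of the right-hand sides
  have hB : Tendsto (fun n => ∫ x : ℝ × ℝ,
        (((pd1 ζ (x + t n • ((0:ℝ), (-1:ℝ))) - pd1 ζ x) / t n) * g x -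
         ((pd2 ζ (x + t n • ((-1:ℝ), (0:ℝ))) - pd2 ζ x) / t n) * g x)) atTop
      (𝓝 (∫ _ : ℝ × ℝ, (0:ℝ))) := by
    apply tendsto_integral_of_dominated_convergence
      (bound := Set.indicator (Metric.cthickening 1 (tsupport ζ))
        (fun _ => ((C1 : ℝ) + (C2 : ℝ)) * M))
    · intro n
      exact (((((hφ1.continuous.comp (continuous_add_right _)).sub hφ1.continuous).div_const
        _).mul hgc).sub
        (((((hφ2.continuous.comp (continuous_add_right _)).sub hφ2.continuous).div_const
        _).mul hgc))).aestronglyMeasurable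
    · rw [integrable_indicator_iff hK1c.isClosed.measurableSet]
      exact integrableOn_const hK1c.measure_lt_top.ne
    · intro n
      refine Eventually.of_forall fun x => ?_
      by_cases hx : x ∈ Metric.cthickening 1 (tsupport ζ)
      · rw [Set.indicator_of_mem hx]
        have hM' : |g x| ≤ M := hM x hx
        have hq1 : |(pd1 ζ (x + t n • ((0:ℝ), (-1:ℝ))) - pd1 ζ x) / t n| ≤ (C1 : ℝ) :=
          quotBound (pd1 ζ) C1 hC1 _ (by rw [hnorm]; norm_num) n x
        have hq2 : |(pd2 ζ (x + t n • ((-1:ℝ), (0:ℝ))) - pd2 ζ x) / t n| ≤ (C2 : ℝ) :=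
          quotBound (pd2 ζ) C2 hC2 _ (by rw [hnorm]; norm_num) n x
        have hMnn : 0 ≤ M := le_trans (abs_nonneg _) hM'
        calc ‖((pd1 ζ (x + t n • ((0:ℝ), (-1:ℝ))) - pd1 ζ x) / t n) * g x -
              ((pd2 ζ (x + t n • ((-1:ℝ), (0:ℝ))) - pd2 ζ x) / t n) * g x‖
            ≤ ‖((pd1 ζ (x + t n • ((0:ℝ), (-1:ℝ))) - pd1 ζ x) / t n) * g x‖ +
              ‖((pd2 ζ (x + t n • ((-1:ℝ), (0:ℝ))) - pd2 ζ x) / t n) * g x‖ := norm_sub_le _ _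
          _ = |(pd1 ζ (x + t n • ((0:ℝ), (-1:ℝ))) - pd1 ζ x) / t n| * |g x| +
              |(pd2 ζ (x + t n • ((-1:ℝ), (0:ℝ))) - pd2 ζ x) / t n| * |g x| := by
              simp [Real.norm_eq_abs, abs_mul, abs_div]
          _ ≤ (C1 : ℝ) * M + (C2 : ℝ) * M :=
              add_le_add (mul_le_mul hq1 hM' (abs_nonneg _) C1.coe_nonneg)
                (mul_le_mul hq2 hM' (abs_nonneg _) C2.coe_nonneg)
          _ = ((C1 : ℝ) + (C2 : ℝ)) * M := by ring
      · rw [Set.indicator_of_notMem hx]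
        have hmem : ∀ v : ℝ × ℝ, ‖v‖ = 1 → x + t n • v ∉ tsupport ζ := by
          intro v hv hmemv
          apply hx
          refine Metric.mem_cthickening_of_dist_le x (x + t n • v) 1 _ hmemv ?_
          rw [dist_eq_norm]
          have : x - (x + t n • v) = -(t n • v) := by abel
          rw [this, norm_neg, norm_smul, hv, mul_one, Real.norm_eq_abs, abs_of_pos (htpos n)]
          exact ht1 n
        have hxt : x ∉ tsupport ζ := fun h => hx (Metric.self_subset_cthickening _ h)
        have z1 : pd1 ζ x = 0 := by simp only [pd1]; rw [hfz x hxt]; simp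
        have z2 : pd2 ζ x = 0 := by simp only [pd2]; rw [hfz x hxt]; simp
        have z3 : pd1 ζ (x + t n • ((0:ℝ), (-1:ℝ))) = 0 := by
          have h := hmem ((0:ℝ), (-1:ℝ)) (by rw [hnorm]; norm_num)
          simp only [pd1]; rw [hfz _ h]; simp
        have z4 : pd2 ζ (x + t n • ((-1:ℝ), (0:ℝ))) = 0 := by
          have h := hmem ((-1:ℝ), (0:ℝ)) (by rw [hnorm]; norm_num)
          simp only [pd2]; rw [hfz _ h]; simp
        rw [z1, z2, z3, z4]
        simp
    · refine Eventually.of_forall fun x => ?_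
      have l1 := (dqTendsto ((hφ1.differentiable (by simp)) x) (((0:ℝ), (-1:ℝ)) : ℝ × ℝ)
        ht').mul_const (g x)
      have l2 := (dqTendsto ((hφ2.differentiable (by simp)) x) (((-1:ℝ), (0:ℝ)) : ℝ × ℝ)
        ht').mul_const (g x)
      have hlim := l1.sub l2
      have hval : fderiv ℝ (pd1 ζ) x ((0:ℝ), (-1:ℝ)) * g x -
          fderiv ℝ (pd2 ζ) x ((-1:ℝ), (0:ℝ)) * g x = 0 := by
        have e1 : (((0:ℝ), (-1:ℝ)) : ℝ × ℝ) = -((0:ℝ), (1:ℝ)) := by norm_num [Prod.ext_iff]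
        have e2 : (((-1:ℝ), (0:ℝ)) : ℝ × ℝ) = -((1:ℝ), (0:ℝ)) := by norm_num [Prod.ext_iff]
        rw [e1, e2, map_neg, map_neg, hsymm x]; ring
      rw [hval] at hlim
      exact hlim
  -- conclusion
  have hkey : ∀ n, (∫ x : ℝ × ℝ, (pd1 ζ x * ((g (x + t n • ((0:ℝ), (1:ℝ))) - g x) / t n) -
        pd2 ζ x * ((g (x + t n • ((1:ℝ), (0:ℝ))) - g x) / t n))) =
      ∫ x : ℝ × ℝ, (((pd1 ζ (x + t n • ((0:ℝ), (-1:ℝ))) - pd1 ζ x) / t n) * g x -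
        ((pd2 ζ (x + t n • ((-1:ℝ), (0:ℝ))) - pd2 ζ x) / t n) * g x) :=
    fun n => key (t n) (htpos n).ne'
  have hA' : Tendsto (fun n => ∫ x : ℝ × ℝ,
      (((pd1 ζ (x + t n • ((0:ℝ), (-1:ℝ))) - pd1 ζ x) / t n) * g x -
        ((pd2 ζ (x + t n • ((-1:ℝ), (0:ℝ))) - pd2 ζ x) / t n) * g x)) atTop
      (𝓝 (∫ x : ℝ × ℝ, (pd1 ζ x * pd2 g x - pd2 ζ x * pd1 g x))) := by
    refine hA.congr fun n => hkey n
  have : (∫ x : ℝ × ℝ, (pd1 ζ x * pd2 g x - pd2 ζ x * pd1 g x)) = ∫ _ : ℝ × ℝ, (0:ℝ) :=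
    tendsto_nhds_unique hA' hB
  simpa using this

theorem stmt17 (Ω : Set (ℝ × ℝ)) (hΩ : IsOpen Ω)
    (F1 F2 : ℝ × ℝ → ℝ) (L : NNReal)
    (hF : LipschitzOnWith L (fun x => (F1 x, F2 x)) Ω)
    (hK : ∀ᵐ x ∂(volume.restrict Ω),
      DifferentiableAt ℝ F1 x ∧ DifferentiableAt ℝ F2 x ∧ ∃ θ : ℝ,
        pd1 F1 x = -(2 / 3) * cos θ ^ 3 ∧
        pd2 F1 x = (2 / 3) * sin θ ^ 3 ∧
        pd1 F2 x = -sin θ * (1 - (2 / 3) * sin θ ^ 2) ∧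
        pd2 F2 x = -cos θ * (1 - (2 / 3) * cos θ ^ 2))
    (m : ℝ × ℝ → ℝ × ℝ)
    (hm : ∀ x, m x = (-(pd1 F1 x) - pd2 F2 x, pd2 F1 x - pd1 F2 x)) :
    (∀ᵐ x ∂(volume.restrict Ω),
      (m x).1 ^ 2 + (m x).2 ^ 2 = 1 ∧
      (pd1 F1 x, pd2 F1 x) = rotI (JKS1 (m x)) ∧
      (pd1 F2 x, pd2 F2 x) = rotI (JKS2 (m x))) ∧
    (∀ ζ : ℝ × ℝ → ℝ, ContDiff ℝ (⊤ : ℕ∞) ζ → HasCompactSupport ζ → tsupport ζ ⊆ Ω →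
      (∫ x in Ω, (pd1 ζ x * (JKS1 (m x)).1 + pd2 ζ x * (JKS1 (m x)).2)) = 0 ∧
      (∫ x in Ω, (pd1 ζ x * (JKS2 (m x)).1 + pd2 ζ x * (JKS2 (m x)).2)) = 0) := by
  have hg1eqpd : ∀ (f g : ℝ × ℝ → ℝ), ∀ x, fderiv ℝ f x = fderiv ℝ g x →
      pd1 f x = pd1 g x ∧ pd2 f x = pd2 g x := fun f g x h => by
    constructor <;> simp only [pd1, pd2, h]
  constructor
  · filter_upwards [hK] with x hx
    obtain ⟨-, -, θ, h1, h2, h3, h4⟩ := hx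
    have pyth := sin_sq_add_cos_sq θ
    rw [hm x]
    simp only [JKS1, JKS2, rotI, Prod.mk.injEq]
    rw [h1, h2, h3, h4]
    refine ⟨?_, ⟨?_, ?_⟩, ?_, ?_⟩
    · linear_combination pyth
    · linear_combination (-Real.cos θ) * pyth
    · linear_combination (Real.sin θ) * pyth
    · ring
    · ring
  · intro ζ hζ hζc hζΩ
    -- Lipschitz extensions of the components
    have hF1 : LipschitzOnWith L F1 Ω := by
      have h := LipschitzWith.prod_fst.comp_lipschitzOnWith hF
      rw [one_mul] at h; exact h
    have hF2 : LipschitzOnWith L F2 Ω := by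
      have h := LipschitzWith.prod_snd.comp_lipschitzOnWith hF
      rw [one_mul] at h; exact h
    obtain ⟨g1, hg1L, hg1e⟩ := hF1.extend_real
    obtain ⟨g2, hg2L, hg2e⟩ := hF2.extend_real
    have hfd1 : ∀ x ∈ Ω, fderiv ℝ F1 x = fderiv ℝ g1 x := fun x hx =>
      Filter.EventuallyEq.fderiv_eq (Filter.eventually_of_mem (hΩ.mem_nhds hx) fun y hy => hg1e hy)
    have hfd2 : ∀ x ∈ Ω, fderiv ℝ F2 x = fderiv ℝ g2 x := fun x hx =>
      Filter.EventuallyEq.fderiv_eq (Filter.eventually_of_mem (hΩ.mem_nhds hx) fun y hy => hg2e hy)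
    have hz : ∀ x, x ∉ Ω → pd1 ζ x = 0 ∧ pd2 ζ x = 0 := by
      intro x hx
      have hxt : x ∉ tsupport ζ := fun h => hx (hζΩ h)
      have h0 : fderiv ℝ ζ x = 0 :=
        Function.notMem_support.mp (fun h => hxt (support_fderiv_subset ℝ h))
      constructor <;> simp [pd1, pd2, h0]
    have main : ∀ g : ℝ × ℝ → ℝ, LipschitzWith L g →
        (∫ x in Ω, (pd1 ζ x * pd2 g x - pd2 ζ x * pd1 g x)) = 0 := by
      intro g hgL
      rw [setIntegral_eq_integral_of_forall_compl_eq_zero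
        (fun x hx => by rw [(hz x hx).1, (hz x hx).2]; ring)]
      exact curl_integral_zero g L hgL ζ hζ hζc
    constructor
    · have congr1 : (∫ x in Ω, (pd1 ζ x * (JKS1 (m x)).1 + pd2 ζ x * (JKS1 (m x)).2))
          = ∫ x in Ω, (pd1 ζ x * pd2 g1 x - pd2 ζ x * pd1 g1 x) := by
        refine integral_congr_ae ?_
        filter_upwards [hK, ae_restrict_mem hΩ.measurableSet] with x hx hxΩ
        obtain ⟨-, -, θ, h1, h2, h3, h4⟩ := hx
        obtain ⟨e1, e2⟩ := hg1eqpd F1 g1 x (hfd1 x hxΩ)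
        rw [← e1, ← e2, hm x]
        simp only [JKS1]
        rw [h1, h2, h3, h4]
        have pyth := sin_sq_add_cos_sq θ
        linear_combination (-(Real.sin θ) * pd1 ζ x - Real.cos θ * pd2 ζ x) * pyth
      rw [congr1]
      exact main g1 hg1L
    · have congr2 : (∫ x in Ω, (pd1 ζ x * (JKS2 (m x)).1 + pd2 ζ x * (JKS2 (m x)).2))
          = ∫ x in Ω, (pd1 ζ x * pd2 g2 x - pd2 ζ x * pd1 g2 x) := by
        refine integral_congr_ae ?_
        filter_upwards [hK, ae_restrict_mem hΩ.measurableSet] with x hx hxΩ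
        obtain ⟨-, -, θ, h1, h2, h3, h4⟩ := hx
        obtain ⟨e1, e2⟩ := hg1eqpd F2 g2 x (hfd2 x hxΩ)
        rw [← e1, ← e2, hm x]
        simp only [JKS2]
        rw [h1, h2, h3, h4]
        ring
      rw [congr2]
      exact main g2 hg2L
end
end
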